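/- arXiv:1410.8756 — 3 statements merged into one kernel-verified Lean document; each statement's English description precedes it below -/
import Mathlib

section
/- If a finite simple graph G contains K₂,₃ as a minor, then G contains as a contraction at least one of the following three graphs: K₄, K₂,₃, or K₂,₃⁺ (the graph obtained from K₂,₃ by adding an edge between its two degree-3 vertices). -/
/-- The contraction relation of the paper. -/
def IsContraction {V₁ V₂ : Type*} (G₁ : SimpleGraph V₁) (G₂ : SimpleGraph V₂) : Prop :=
  ∃ φ : V₂ → V₁, Function.Surjective φ ∧
    (∀ v : V₁, (G₂.induce (φ ⁻¹' {v})).Connected) ∧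
    (∀ u v : V₁, u ≠ v →
      (G₁.Adj u v ↔ (G₂.induce (φ ⁻¹' {u} ∪ φ ⁻¹' {v})).Connected))

/-- The minor relation of the paper (adjacency only implies connectivity of fiber unions). -/
def IsMinor {V₁ V₂ : Type*} (G₁ : SimpleGraph V₁) (G₂ : SimpleGraph V₂) : Prop :=
  ∃ φ : V₂ → V₁, Function.Surjective φ ∧
    (∀ v : V₁, (G₂.induce (φ ⁻¹' {v})).Connected) ∧
    (∀ u v : V₁, u ≠ v →
      G₁.Adj u v → (G₂.induce (φ ⁻¹' {u} ∪ φ ⁻¹' {v})).Connected)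

/-- `K₂,₃⁺`: the graph obtained from `K₂,₃` by adding an edge between its two
degree-3 vertices. -/
def K23plus : SimpleGraph (Fin 2 ⊕ Fin 3) :=
  completeBipartiteGraph (Fin 2) (Fin 3) ⊔
    SimpleGraph.fromRel (fun a b => a = Sum.inl 0 ∧ b = Sum.inl 1)

lemma fin3_third : ∀ a b : Fin 3, a ≠ b → ∃ c, c ≠ a ∧ c ≠ b := by decide

lemma fin3_uniq : ∀ a b c x : Fin 3, a ≠ b → c ≠ a → c ≠ b → x ≠ a → x ≠ b → x = c := by decide

def k4map (a b : Fin 3) : Fin 2 ⊕ Fin 3 → Fin 4 :=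
  Sum.elim (fun i => if i = 0 then 0 else 1)
    (fun x => if x = a then 2 else if x = b then 3 else 0)

lemma K4_case {V : Type*} (G : SimpleGraph V) (φ : V → Fin 2 ⊕ Fin 3)
    (hsurj : Function.Surjective φ)
    (hfib : ∀ v, (G.induce (φ ⁻¹' {v})).Connected)
    (hadj : ∀ u v, u ≠ v → (completeBipartiteGraph (Fin 2) (Fin 3)).Adj u v →
      (G.induce (φ ⁻¹' {u} ∪ φ ⁻¹' {v})).Connected)
    (a b : Fin 3) (hab : a ≠ b)
    (hconn : (G.induce (φ ⁻¹' {Sum.inr a} ∪ φ ⁻¹' {Sum.inr b})).Connected) :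
    IsContraction (SimpleGraph.completeGraph (Fin 4)) G := by
  obtain ⟨c, hca, hcb⟩ := fin3_third a b hab
  have hσl0 : k4map a b (Sum.inl 0) = 0 := by simp [k4map]
  have hσl1 : k4map a b (Sum.inl 1) = 1 := by simp [k4map]
  have hσa : k4map a b (Sum.inr a) = 2 := by simp [k4map]
  have hσb : k4map a b (Sum.inr b) = 3 := by simp [k4map, hab.symm]
  have hσc : k4map a b (Sum.inr c) = 0 := by simp [k4map, hca, hcb]
  have hval : ∀ s : Fin 2 ⊕ Fin 3, s = Sum.inl 0 ∨ s = Sum.inl 1 ∨ s = Sum.inr a ∨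
      s = Sum.inr b ∨ s = Sum.inr c := by
    rintro (i | j)
    · fin_cases i <;> simp
    · by_cases hja : j = a
      · subst hja; simp
      · by_cases hjb : j = b
        · subst hjb; simp
        · have := fin3_uniq a b c j hab hca hcb hja hjb
          subst this; simp
  have hpre : ∀ k : Fin 4, ∀ x : V, ((k4map a b ∘ φ) x = k ↔
      (k = 0 ∧ (φ x = Sum.inl 0 ∨ φ x = Sum.inr c)) ∨
      (k = 1 ∧ φ x = Sum.inl 1) ∨ (k = 2 ∧ φ x = Sum.inr a) ∨
      (k = 3 ∧ φ x = Sum.inr b)) := by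
    intro k x
    rcases hval (φ x) with hx | hx | hx | hx | hx <;>
      rw [Function.comp_apply, hx] <;>
      [rw [hσl0]; rw [hσl1]; rw [hσa]; rw [hσb]; rw [hσc]] <;>
      constructor <;> intro h
    · subst h; simp
    · rcases h with ⟨h1, h⟩ | ⟨h1, h⟩ | ⟨h1, h⟩ | ⟨h1, h⟩ <;> simp_all
    · subst h; simp
    · rcases h with ⟨h1, h⟩ | ⟨h1, h⟩ | ⟨h1, h⟩ | ⟨h1, h⟩ <;> simp_all
    · subst h; simp
    · rcases h with ⟨h1, h⟩ | ⟨h1, h⟩ | ⟨h1, h⟩ | ⟨h1, h⟩ <;> simp_all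
    · subst h; simp [hab.symm]
    · rcases h with ⟨h1, h⟩ | ⟨h1, h⟩ | ⟨h1, h⟩ | ⟨h1, h⟩ <;> simp_all
    · subst h; simp
    · rcases h with ⟨h1, h⟩ | ⟨h1, h⟩ | ⟨h1, h⟩ | ⟨h1, h⟩ <;> simp_all [hca, hcb]
  have h0 : (k4map a b ∘ φ) ⁻¹' {(0 : Fin 4)} = φ ⁻¹' {Sum.inl 0} ∪ φ ⁻¹' {Sum.inr c} := by
    ext x
    simp only [Set.mem_preimage, Set.mem_union, Set.mem_singleton_iff, hpre 0 x]
    simp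
  have h1 : (k4map a b ∘ φ) ⁻¹' {(1 : Fin 4)} = φ ⁻¹' {Sum.inl 1} := by
    ext x
    simp only [Set.mem_preimage, Set.mem_singleton_iff, hpre 1 x]
    simp
  have h2 : (k4map a b ∘ φ) ⁻¹' {(2 : Fin 4)} = φ ⁻¹' {Sum.inr a} := by
    ext x
    simp only [Set.mem_preimage, Set.mem_singleton_iff, hpre 2 x]
    simp
  have h3 : (k4map a b ∘ φ) ⁻¹' {(3 : Fin 4)} = φ ⁻¹' {Sum.inr b} := by
    ext x
    simp only [Set.mem_preimage, Set.mem_singleton_iff, hpre 3 x]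
    simp
  have hne : ∀ v : Fin 2 ⊕ Fin 3, (φ ⁻¹' {v}).Nonempty := by
    intro v; obtain ⟨x, hx⟩ := hsurj v; exact ⟨x, hx⟩
  have e0c : (G.induce (φ ⁻¹' {Sum.inl 0} ∪ φ ⁻¹' {Sum.inr c})).Connected :=
    hadj _ _ (by simp) (by simp)
  have e1c : (G.induce (φ ⁻¹' {Sum.inl 1} ∪ φ ⁻¹' {Sum.inr c})).Connected :=
    hadj _ _ (by simp) (by simp)
  have e0a : (G.induce (φ ⁻¹' {Sum.inl 0} ∪ φ ⁻¹' {Sum.inr a})).Connected :=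
    hadj _ _ (by simp) (by simp)
  have e1a : (G.induce (φ ⁻¹' {Sum.inl 1} ∪ φ ⁻¹' {Sum.inr a})).Connected :=
    hadj _ _ (by simp) (by simp)
  have e0b : (G.induce (φ ⁻¹' {Sum.inl 0} ∪ φ ⁻¹' {Sum.inr b})).Connected :=
    hadj _ _ (by simp) (by simp)
  have e1b : (G.induce (φ ⁻¹' {Sum.inl 1} ∪ φ ⁻¹' {Sum.inr b})).Connected :=
    hadj _ _ (by simp) (by simp)
  have glue : ∀ (A B C : Set V), A.Nonempty → (G.induce (A ∪ B)).Connected →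
      (G.induce (A ∪ C)).Connected → (G.induce ((A ∪ B) ∪ (A ∪ C))).Connected := by
    intro A B C hA hAB hAC
    exact SimpleGraph.induce_union_connected hAB.preconnected hAC.preconnected
      ⟨hA.choose, Or.inl hA.choose_spec, Or.inl hA.choose_spec⟩
  have symm : ∀ s t : Set V, (G.induce (s ∪ t)).Connected →
      (G.induce (t ∪ s)).Connected := by
    intro s t h; rwa [Set.union_comm] at h
  have c01 : (G.induce ((k4map a b ∘ φ) ⁻¹' {(0:Fin 4)} ∪ (k4map a b ∘ φ) ⁻¹' {1})).Connected := by
    rw [h0, h1]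
    have hg := glue (φ ⁻¹' {Sum.inr c}) (φ ⁻¹' {Sum.inl 0}) (φ ⁻¹' {Sum.inl 1})
      (hne _) (symm _ _ e0c) (symm _ _ e1c)
    have hset : (φ ⁻¹' {Sum.inl 0} ∪ φ ⁻¹' {Sum.inr c}) ∪ φ ⁻¹' {Sum.inl 1} =
        (φ ⁻¹' {Sum.inr c} ∪ φ ⁻¹' {Sum.inl 0}) ∪
          (φ ⁻¹' {Sum.inr c} ∪ φ ⁻¹' {Sum.inl 1}) := by
      ext x; simp only [Set.mem_union]; tauto
    rw [hset]; exact hg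
  have c02 : (G.induce ((k4map a b ∘ φ) ⁻¹' {(0:Fin 4)} ∪ (k4map a b ∘ φ) ⁻¹' {2})).Connected := by
    rw [h0, h2]
    have hg := glue (φ ⁻¹' {Sum.inl 0}) (φ ⁻¹' {Sum.inr c}) (φ ⁻¹' {Sum.inr a})
      (hne _) e0c e0a
    have hset : (φ ⁻¹' {Sum.inl 0} ∪ φ ⁻¹' {Sum.inr c}) ∪ φ ⁻¹' {Sum.inr a} =
        (φ ⁻¹' {Sum.inl 0} ∪ φ ⁻¹' {Sum.inr c}) ∪
          (φ ⁻¹' {Sum.inl 0} ∪ φ ⁻¹' {Sum.inr a}) := by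
      ext x; simp only [Set.mem_union]; tauto
    rw [hset]; exact hg
  have c03 : (G.induce ((k4map a b ∘ φ) ⁻¹' {(0:Fin 4)} ∪ (k4map a b ∘ φ) ⁻¹' {3})).Connected := by
    rw [h0, h3]
    have hg := glue (φ ⁻¹' {Sum.inl 0}) (φ ⁻¹' {Sum.inr c}) (φ ⁻¹' {Sum.inr b})
      (hne _) e0c e0b
    have hset : (φ ⁻¹' {Sum.inl 0} ∪ φ ⁻¹' {Sum.inr c}) ∪ φ ⁻¹' {Sum.inr b} =
        (φ ⁻¹' {Sum.inl 0} ∪ φ ⁻¹' {Sum.inr c}) ∪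
          (φ ⁻¹' {Sum.inl 0} ∪ φ ⁻¹' {Sum.inr b}) := by
      ext x; simp only [Set.mem_union]; tauto
    rw [hset]; exact hg
  have c12 : (G.induce ((k4map a b ∘ φ) ⁻¹' {(1:Fin 4)} ∪ (k4map a b ∘ φ) ⁻¹' {2})).Connected := by
    rw [h1, h2]; exact e1a
  have c13 : (G.induce ((k4map a b ∘ φ) ⁻¹' {(1:Fin 4)} ∪ (k4map a b ∘ φ) ⁻¹' {3})).Connected := by
    rw [h1, h3]; exact e1b
  have c23 : (G.induce ((k4map a b ∘ φ) ⁻¹' {(2:Fin 4)} ∪ (k4map a b ∘ φ) ⁻¹' {3})).Connected := by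
    rw [h2, h3]; exact hconn
  refine ⟨k4map a b ∘ φ, ?_, ?_, ?_⟩
  · intro k
    fin_cases k
    · obtain ⟨x, hx⟩ := hsurj (Sum.inl 0)
      exact ⟨x, by simp only [Function.comp_apply, hx]; exact hσl0⟩
    · obtain ⟨x, hx⟩ := hsurj (Sum.inl 1)
      exact ⟨x, by simp only [Function.comp_apply, hx]; exact hσl1⟩
    · obtain ⟨x, hx⟩ := hsurj (Sum.inr a)
      exact ⟨x, by simp only [Function.comp_apply, hx]; exact hσa⟩
    · obtain ⟨x, hx⟩ := hsurj (Sum.inr b)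
      exact ⟨x, by simp only [Function.comp_apply, hx]; exact hσb⟩
  · intro v
    fin_cases v
    · show (G.induce ((k4map a b ∘ φ) ⁻¹' {(0:Fin 4)})).Connected; rw [h0]; exact e0c
    · show (G.induce ((k4map a b ∘ φ) ⁻¹' {(1:Fin 4)})).Connected; rw [h1]; exact hfib _
    · show (G.induce ((k4map a b ∘ φ) ⁻¹' {(2:Fin 4)})).Connected; rw [h2]; exact hfib _
    · show (G.induce ((k4map a b ∘ φ) ⁻¹' {(3:Fin 4)})).Connected; rw [h3]; exact hfib _
  · intro u v huv
    constructor
    · intro _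
      fin_cases u <;> fin_cases v <;>
        first
          | exact absurd rfl huv
          | exact c01 | exact c02 | exact c03 | exact c12 | exact c13 | exact c23
          | exact symm _ _ c01 | exact symm _ _ c02 | exact symm _ _ c03
          | exact symm _ _ c12 | exact symm _ _ c13 | exact symm _ _ c23
    · intro _; simp [SimpleGraph.completeGraph, huv]

lemma K23plus_adj01 : K23plus.Adj (Sum.inl 0) (Sum.inl 1) := by
  simp [K23plus, SimpleGraph.fromRel_adj]

/-- If `G` contains `K₂,₃` as a minor, then `G` contains `K₄`, `K₂,₃`, or `K₂,₃⁺`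
as a contraction. -/
theorem stmt14 {V : Type*} [Fintype V] (G : SimpleGraph V)
    (h : IsMinor (completeBipartiteGraph (Fin 2) (Fin 3)) G) :
    IsContraction (SimpleGraph.completeGraph (Fin 4)) G ∨
      IsContraction (completeBipartiteGraph (Fin 2) (Fin 3)) G ∨
      IsContraction K23plus G := by
  obtain ⟨φ, hsurj, hfib, hadj⟩ := h
  by_cases hP : ∃ a b : Fin 3, a ≠ b ∧
      (G.induce (φ ⁻¹' {Sum.inr a} ∪ φ ⁻¹' {Sum.inr b})).Connected
  · obtain ⟨a, b, hab, hc⟩ := hP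
    exact Or.inl (K4_case G φ hsurj hfib hadj a b hab hc)
  by_cases hL : (G.induce (φ ⁻¹' {Sum.inl 0} ∪ φ ⁻¹' {Sum.inl 1})).Connected
  · right; right
    refine ⟨φ, hsurj, hfib, ?_⟩
    rintro (i | j) (i' | j') huv
    · have hii : i ≠ i' := fun hh => huv (by rw [hh])
      constructor
      · intro _
        fin_cases i <;> fin_cases i'
        · exact absurd rfl hii
        · exact hL
        · rwa [Set.union_comm]
        · exact absurd rfl hii
      · intro _
        fin_cases i <;> fin_cases i'
        · exact absurd rfl hii
        · exact K23plus_adj01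
        · exact K23plus_adj01.symm
        · exact absurd rfl hii
    · constructor
      · intro _; exact hadj _ _ huv (by simp)
      · intro _; simp [K23plus]
    · constructor
      · intro _; exact hadj _ _ huv (by simp)
      · intro _; simp [K23plus]
    · have hjj : j ≠ j' := fun hh => huv (by rw [hh])
      constructor
      · intro hA; exact absurd hA (by simp [K23plus, SimpleGraph.fromRel_adj])
      · intro hC; exact absurd ⟨j, j', hjj, hC⟩ hP
  · right; left
    refine ⟨φ, hsurj, hfib, ?_⟩
    rintro (i | j) (i' | j') huv
    · have hii : i ≠ i' := fun hh => huv (by rw [hh])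
      constructor
      · intro hA; exact absurd hA (by simp)
      · intro hC
        exfalso
        fin_cases i <;> fin_cases i'
        · exact absurd rfl hii
        · exact hL hC
        · exact hL (by rwa [Set.union_comm] at hC)
        · exact absurd rfl hii
    · constructor
      · intro _; exact hadj _ _ huv (by simp)
      · intro _; simp
    · constructor
      · intro _; exact hadj _ _ huv (by simp)
      · intro _; simp
    · have hjj : j ≠ j' := fun hh => huv (by rw [hh])
      constructor
      · intro hA; exact absurd hA (by simp)
      · intro hC; exact absurd ⟨j, j', hjj, hC⟩ hP
end

section
/- A finite simple graph G is outerplanar if and only if it contains none of K₄, K₂,₃, K₂,₃⁺ as a contraction, where K₂,₃⁺ is K₂,₃ plus an edge joining the two degree-3 vertices. -/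
/-- A graph is outerplanar iff it has no `K₄` minor and no `K₂,₃` minor. -/
def Outerplanar {V : Type*} (G : SimpleGraph V) : Prop :=
  ¬ IsMinor (SimpleGraph.completeGraph (Fin 4)) G ∧
    ¬ IsMinor (completeBipartiteGraph (Fin 2) (Fin 3)) G

section helpers
variable {V W : Type*} {G : SimpleGraph V}

lemma reach_mono {s t : Set V} (hst : s ⊆ t) {x y : ↥s}
    (h : (G.induce s).Reachable x y) :
    (G.induce t).Reachable ⟨x.1, hst x.2⟩ ⟨y.1, hst y.2⟩ := by
  let f : G.induce s →g G.induce t := ⟨fun z => ⟨z.1, hst z.2⟩, fun h => h⟩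
  exact h.map f

lemma star_conn (s : Set V) (a : V) (ha : a ∈ s)
    (h : ∀ x ∈ s, x = a ∨ G.Adj a x) : (G.induce s).Connected := by
  rw [SimpleGraph.connected_iff]
  refine ⟨?_, ⟨⟨a, ha⟩⟩⟩
  have key : ∀ x : s, (G.induce s).Reachable x ⟨a, ha⟩ := by
    rintro ⟨x, hx⟩
    rcases h x hx with rfl | hax
    · exact SimpleGraph.Reachable.refl _
    · exact SimpleGraph.Adj.reachable hax.symm
  intro x y
  exact (key x).trans (key y).symm

lemma lift_conn {H : SimpleGraph W} {φ : V → W}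
    (hfib : ∀ w, (G.induce (φ ⁻¹' {w})).Connected)
    (hadj : ∀ u v : W, u ≠ v → H.Adj u v →
      (G.induce (φ ⁻¹' {u} ∪ φ ⁻¹' {v})).Connected)
    {S : Set W} (hS : (H.induce S).Connected) :
    (G.induce (φ ⁻¹' S)).Connected := by
  have fib_sub : ∀ {w : W}, w ∈ S → φ ⁻¹' {w} ⊆ φ ⁻¹' S := by
    intro w hw x hx
    have : φ x = w := hx
    simp [Set.mem_preimage, this, hw]
  have key : ∀ (a b : ↥S) (p : (H.induce S).Walk a b) (x y : ↥(φ ⁻¹' S)),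
      φ x.1 = a.1 → φ y.1 = b.1 → (G.induce (φ ⁻¹' S)).Reachable x y := by
    intro a b p
    induction p with
    | nil =>
      rename_i a
      intro x y hx hy
      have hx' : x.1 ∈ φ ⁻¹' {a.1} := hx
      have hy' : y.1 ∈ φ ⁻¹' {a.1} := hy
      have := (hfib a.1).preconnected ⟨x.1, hx'⟩ ⟨y.1, hy'⟩
      exact reach_mono (fib_sub a.2) this
    | cons h p ih =>
      rename_i a c b
      intro x y hx hy
      have hAdj : H.Adj a.1 c.1 := h
      obtain ⟨⟨z, hz⟩⟩ := (hfib c.1).nonempty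
      have hzc : φ z = c.1 := hz
      have hzS : z ∈ φ ⁻¹' S := by simp [Set.mem_preimage, hzc, c.2]
      have hu := (hadj a.1 c.1 hAdj.ne hAdj).preconnected
        ⟨x.1, Or.inl (show φ x.1 ∈ ({a.1} : Set W) from hx)⟩
        ⟨z, Or.inr (show φ z ∈ ({c.1} : Set W) from hzc)⟩
      have hsub : φ ⁻¹' {a.1} ∪ φ ⁻¹' {c.1} ⊆ φ ⁻¹' S :=
        Set.union_subset (fib_sub a.2) (fib_sub c.2)
      exact (reach_mono hsub hu).trans (ih ⟨z, hzS⟩ y hzc hy)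
  rw [SimpleGraph.connected_iff]
  constructor
  · intro x y
    have hxS : φ x.1 ∈ S := x.2
    have hyS : φ y.1 ∈ S := y.2
    obtain ⟨p⟩ := hS.preconnected ⟨φ x.1, hxS⟩ ⟨φ y.1, hyS⟩
    exact key _ _ p x y rfl rfl
  · obtain ⟨⟨w, hw⟩⟩ := hS.nonempty
    obtain ⟨⟨z, hz⟩⟩ := (hfib w).nonempty
    exact ⟨⟨z, fib_sub hw hz⟩⟩

lemma contraction_isMinor {V₁ V₂ : Type*} {G₁ : SimpleGraph V₁} {G₂ : SimpleGraph V₂}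
    (h : IsContraction G₁ G₂) : IsMinor G₁ G₂ :=
  let ⟨φ, hs, hf, ha⟩ := h
  ⟨φ, hs, hf, fun u v huv hadj => (ha u v huv).1 hadj⟩

lemma minor_mono {V₁ V₂ : Type*} {H H' : SimpleGraph V₁} {G₂ : SimpleGraph V₂}
    (hle : H ≤ H') (h : IsMinor H' G₂) : IsMinor H G₂ :=
  let ⟨φ, hs, hf, ha⟩ := h
  ⟨φ, hs, hf, fun u v huv hadj => ha u v huv (hle hadj)⟩

lemma minor_trans {V₁ V₂ V₃ : Type*} {G₁ : SimpleGraph V₁} {G₂ : SimpleGraph V₂}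
    {G₃ : SimpleGraph V₃} (h12 : IsMinor G₁ G₂) (h23 : IsMinor G₂ G₃) : IsMinor G₁ G₃ := by
  obtain ⟨ψ, hψs, hψf, hψa⟩ := h12
  obtain ⟨φ, hφs, hφf, hφa⟩ := h23
  refine ⟨ψ ∘ φ, hψs.comp hφs, ?_, ?_⟩
  · intro v
    have h1 : (ψ ∘ φ) ⁻¹' {v} = φ ⁻¹' (ψ ⁻¹' {v}) := rfl
    rw [h1]
    exact lift_conn hφf hφa (hψf v)
  · intro u v huv hadj
    have h1 : (ψ ∘ φ) ⁻¹' {u} ∪ (ψ ∘ φ) ⁻¹' {v} = φ ⁻¹' (ψ ⁻¹' {u} ∪ ψ ⁻¹' {v}) := by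
      rw [Set.preimage_union]; rfl
    rw [h1]
    exact lift_conn hφf hφa (hψa u v huv hadj)

lemma exists_contraction {W' : Type*} {H : SimpleGraph W'}
    (h : IsMinor H G) : ∃ H' : SimpleGraph W', H ≤ H' ∧ IsContraction H' G := by
  obtain ⟨φ, hs, hf, ha⟩ := h
  refine ⟨⟨fun u v => u ≠ v ∧ (G.induce (φ ⁻¹' {u} ∪ φ ⁻¹' {v})).Connected,
    ⟨fun u v ⟨hne, hc⟩ => ⟨hne.symm, by rwa [Set.union_comm]⟩⟩,
    ⟨fun v ⟨h, _⟩ => h rfl⟩⟩, ?_, φ, hs, hf, fun u v hne => ⟨fun h => h.2, fun hc => ⟨hne, hc⟩⟩⟩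
  intro u v huv
  exact ⟨huv.ne, ha u v huv.ne huv⟩

lemma k4_contr (h : IsMinor (SimpleGraph.completeGraph (Fin 4)) G) :
    IsContraction (SimpleGraph.completeGraph (Fin 4)) G := by
  obtain ⟨H', hle, hc⟩ := exists_contraction h
  have : H' = SimpleGraph.completeGraph (Fin 4) := le_antisymm le_top hle
  rwa [this] at hc

end helpers

lemma k4_minor_of_inr_edge (H' : SimpleGraph (Fin 2 ⊕ Fin 3))
    (hbip : completeBipartiteGraph (Fin 2) (Fin 3) ≤ H')
    {a b : Fin 3} (hab : H'.Adj (Sum.inr a) (Sum.inr b)) :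
    IsMinor (SimpleGraph.completeGraph (Fin 4)) H' := by
  classical
  have hne : a ≠ b := fun e => H'.irrefl (e ▸ hab)
  have hex : ∀ a b : Fin 3, a ≠ b → ∃ c : Fin 3, c ≠ a ∧ c ≠ b := by decide
  obtain ⟨c, hca, hcb⟩ := hex a b hne
  have hcover : ∀ a b c j : Fin 3, a ≠ b → c ≠ a → c ≠ b → (j = a ∨ j = b ∨ j = c) := by decide
  have hB : ∀ (i : Fin 2) (j : Fin 3), H'.Adj (Sum.inl i) (Sum.inr j) := by
    intro i j; exact hbip (by simp)
  set ψ : Fin 2 ⊕ Fin 3 → Fin 4 := fun x =>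
    if x = Sum.inl 0 ∨ x = Sum.inr c then 0
    else if x = Sum.inl 1 then 1
    else if x = Sum.inr a then 2 else 3 with hψ
  have pmem : ∀ x, (ψ x = 0 ↔ x = Sum.inl 0 ∨ x = Sum.inr c) ∧ (ψ x = 1 ↔ x = Sum.inl 1)
      ∧ (ψ x = 2 ↔ x = Sum.inr a) ∧ (ψ x = 3 ↔ x = Sum.inr b) := by
    intro x
    rcases x with i | j
    · fin_cases i <;> simp [hψ]
    · rcases hcover a b c j hne hca hcb with rfl | rfl | rfl <;>
        simp [hψ, hca, hcb, hne, Ne.symm hca, Ne.symm hcb, Ne.symm hne]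
  have p0 : ψ ⁻¹' {0} = {Sum.inl 0, Sum.inr c} := by
    ext x; simpa [Set.mem_preimage] using (pmem x).1
  have p1 : ψ ⁻¹' {1} = {Sum.inl 1} := by
    ext x; simpa [Set.mem_preimage] using (pmem x).2.1
  have p2 : ψ ⁻¹' {2} = {Sum.inr a} := by
    ext x; simpa [Set.mem_preimage] using (pmem x).2.2.1
  have p3 : ψ ⁻¹' {3} = {Sum.inr b} := by
    ext x; simpa [Set.mem_preimage] using (pmem x).2.2.2
  have h4 : ∀ v : Fin 4, v = 0 ∨ v = 1 ∨ v = 2 ∨ v = 3 := by decide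
  refine ⟨ψ, ?_, ?_, ?_⟩
  · intro v
    rcases h4 v with rfl | rfl | rfl | rfl
    · exact ⟨Sum.inl 0, ((pmem _).1).2 (Or.inl rfl)⟩
    · exact ⟨Sum.inl 1, ((pmem _).2.1).2 rfl⟩
    · exact ⟨Sum.inr a, ((pmem _).2.2.1).2 rfl⟩
    · exact ⟨Sum.inr b, ((pmem _).2.2.2).2 rfl⟩
  · intro v
    rcases h4 v with rfl | rfl | rfl | rfl
    · rw [p0]
      refine star_conn _ (Sum.inl 0) (by simp) ?_
      intro x hx
      simp only [Set.mem_insert_iff, Set.mem_singleton_iff] at hx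
      rcases hx with rfl | rfl
      · exact Or.inl rfl
      · exact Or.inr (hB 0 c)
    · rw [p1]
      exact star_conn _ (Sum.inl 1) rfl (fun x hx => Or.inl hx)
    · rw [p2]
      exact star_conn _ (Sum.inr a) rfl (fun x hx => Or.inl hx)
    · rw [p3]
      exact star_conn _ (Sum.inr b) rfl (fun x hx => Or.inl hx)
  · intro u v huv _
    rcases h4 u with rfl | rfl | rfl | rfl <;> rcases h4 v with rfl | rfl | rfl | rfl <;>
        try exact absurd rfl huv
    · rw [p0, p1]
      refine star_conn _ (Sum.inr c) (by simp) ?_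
      intro x hx
      simp only [Set.mem_union, Set.mem_insert_iff, Set.mem_singleton_iff] at hx
      rcases hx with (rfl | rfl) | rfl
      · exact Or.inr (hB 0 c).symm
      · exact Or.inl rfl
      · exact Or.inr (hB 1 c).symm
    · rw [p0, p2]
      refine star_conn _ (Sum.inl 0) (by simp) ?_
      intro x hx
      simp only [Set.mem_union, Set.mem_insert_iff, Set.mem_singleton_iff] at hx
      rcases hx with (rfl | rfl) | rfl
      · exact Or.inl rfl
      · exact Or.inr (hB 0 c)
      · exact Or.inr (hB 0 a)
    · rw [p0, p3]
      refine star_conn _ (Sum.inl 0) (by simp) ?_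
      intro x hx
      simp only [Set.mem_union, Set.mem_insert_iff, Set.mem_singleton_iff] at hx
      rcases hx with (rfl | rfl) | rfl
      · exact Or.inl rfl
      · exact Or.inr (hB 0 c)
      · exact Or.inr (hB 0 b)
    · rw [p1, p0]
      refine star_conn _ (Sum.inr c) (by simp) ?_
      intro x hx
      simp only [Set.mem_union, Set.mem_insert_iff, Set.mem_singleton_iff] at hx
      rcases hx with rfl | (rfl | rfl)
      · exact Or.inr (hB 1 c).symm
      · exact Or.inr (hB 0 c).symm
      · exact Or.inl rfl
    · rw [p1, p2]
      refine star_conn _ (Sum.inl 1) (by simp) ?_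
      intro x hx
      simp only [Set.mem_union, Set.mem_singleton_iff] at hx
      rcases hx with rfl | rfl
      · exact Or.inl rfl
      · exact Or.inr (hB 1 a)
    · rw [p1, p3]
      refine star_conn _ (Sum.inl 1) (by simp) ?_
      intro x hx
      simp only [Set.mem_union, Set.mem_singleton_iff] at hx
      rcases hx with rfl | rfl
      · exact Or.inl rfl
      · exact Or.inr (hB 1 b)
    · rw [p2, p0]
      refine star_conn _ (Sum.inl 0) (by simp) ?_
      intro x hx
      simp only [Set.mem_union, Set.mem_insert_iff, Set.mem_singleton_iff] at hx
      rcases hx with rfl | (rfl | rfl)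
      · exact Or.inr (hB 0 a)
      · exact Or.inl rfl
      · exact Or.inr (hB 0 c)
    · rw [p2, p1]
      refine star_conn _ (Sum.inl 1) (by simp) ?_
      intro x hx
      simp only [Set.mem_union, Set.mem_singleton_iff] at hx
      rcases hx with rfl | rfl
      · exact Or.inr (hB 1 a)
      · exact Or.inl rfl
    · rw [p2, p3]
      refine star_conn _ (Sum.inr a) (by simp) ?_
      intro x hx
      simp only [Set.mem_union, Set.mem_singleton_iff] at hx
      rcases hx with rfl | rfl
      · exact Or.inl rfl
      · exact Or.inr hab
    · rw [p3, p0]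
      refine star_conn _ (Sum.inl 0) (by simp) ?_
      intro x hx
      simp only [Set.mem_union, Set.mem_insert_iff, Set.mem_singleton_iff] at hx
      rcases hx with rfl | (rfl | rfl)
      · exact Or.inr (hB 0 b)
      · exact Or.inl rfl
      · exact Or.inr (hB 0 c)
    · rw [p3, p1]
      refine star_conn _ (Sum.inl 1) (by simp) ?_
      intro x hx
      simp only [Set.mem_union, Set.mem_singleton_iff] at hx
      rcases hx with rfl | rfl
      · exact Or.inr (hB 1 b)
      · exact Or.inl rfl
    · rw [p3, p2]
      refine star_conn _ (Sum.inr a) (by simp) ?_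
      intro x hx
      simp only [Set.mem_union, Set.mem_singleton_iff] at hx
      rcases hx with rfl | rfl
      · exact Or.inr hab
      · exact Or.inl rfl

/-- A finite simple graph is outerplanar iff it contains none of `K₄`, `K₂,₃`, `K₂,₃⁺`
as a contraction. -/
theorem stmt15 {V : Type*} [Fintype V] (G : SimpleGraph V) :
    Outerplanar G ↔
      ¬ IsContraction (SimpleGraph.completeGraph (Fin 4)) G ∧
      ¬ IsContraction (completeBipartiteGraph (Fin 2) (Fin 3)) G ∧
      ¬ IsContraction K23plus G := by
  constructor
  · rintro ⟨h4, h23⟩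
    exact ⟨fun h => h4 (contraction_isMinor h), fun h => h23 (contraction_isMinor h),
      fun h => h23 (minor_mono le_sup_left (contraction_isMinor h))⟩
  · rintro ⟨h4, h23, h23p⟩
    constructor
    · exact fun h => h4 (k4_contr h)
    · intro h
      obtain ⟨H', hle, hc⟩ := exists_contraction h
      by_cases hrr : ∃ a b : Fin 3, H'.Adj (Sum.inr a) (Sum.inr b)
      · obtain ⟨a, b, hab⟩ := hrr
        exact h4 (k4_contr (minor_trans (k4_minor_of_inr_edge H' hle hab)
          (contraction_isMinor hc)))
      · push_neg at hrr
        have hll : ∀ i j : Fin 2, H'.Adj (Sum.inl i) (Sum.inl j) →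
            (i = 0 ∧ j = 1) ∨ (i = 1 ∧ j = 0) := by
          intro i j hij
          have : i ≠ j := fun e => H'.irrefl (e ▸ hij)
          fin_cases i <;> fin_cases j <;> simp_all
        have hB : ∀ (i : Fin 2) (j : Fin 3), H'.Adj (Sum.inl i) (Sum.inr j) := by
          intro i j; exact hle (by simp)
        by_cases h01 : H'.Adj (Sum.inl 0) (Sum.inl 1)
        · have : H' = K23plus := by
            ext u v
            rcases u with i | j <;> rcases v with i' | j'
            · constructor
              · intro hadj
                rcases hll i i' hadj with ⟨rfl, rfl⟩ | ⟨rfl, rfl⟩ <;>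
                  simp [K23plus, SimpleGraph.fromRel_adj]
              · intro hadj
                simp only [K23plus, SimpleGraph.sup_adj, completeBipartiteGraph_adj,
                  SimpleGraph.fromRel_adj] at hadj
                rcases hadj with h | ⟨_, ⟨ha, hb⟩ | ⟨ha, hb⟩⟩
                · simp at h
                · rw [Sum.inl.injEq] at ha hb; subst ha; subst hb; exact h01
                · rw [Sum.inl.injEq] at ha hb; subst ha; subst hb; exact h01.symm
            · simp [K23plus, hB i j']
            · constructor
              · intro _; simp [K23plus]
              · intro _; exact (hB i' j).symm
            · constructor
              · intro hadj; exact absurd hadj (hrr j j')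
              · intro hadj
                simp only [K23plus, SimpleGraph.sup_adj, completeBipartiteGraph_adj,
                  SimpleGraph.fromRel_adj] at hadj
                rcases hadj with h | ⟨_, ⟨ha, _⟩ | ⟨_, hb⟩⟩
                · simp at h
                · exact absurd ha (by simp)
                · exact absurd hb (by simp)
          exact h23p (this ▸ hc)
        · have : H' = completeBipartiteGraph (Fin 2) (Fin 3) := by
            ext u v
            rcases u with i | j <;> rcases v with i' | j'
            · constructor
              · intro hadj
                rcases hll i i' hadj with ⟨rfl, rfl⟩ | ⟨rfl, rfl⟩
                · exact absurd hadj h01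
                · exact absurd hadj.symm h01
              · intro hadj; simp at hadj
            · simp [hB i j']
            · constructor
              · intro _; simp
              · intro _; exact (hB i' j).symm
            · constructor
              · intro hadj; exact absurd hadj (hrr j j')
              · intro hadj; simp at hadj
          exact h23 (this ▸ hc)
end

section
/- Let k ≥ 1 and define O_Br(k) as the set of graphs obtained by identifying the roots of an unordered triple (with repetition) of k-level obstruction branches. Then |O_Br(k)| ≥ (4/3)·(5/2)^(3·2^(k-1)); in particular the sequence |O_Br(k)| grows doubly exponentially in k: log log |O_Br(k)| = Θ(k). -/
lemma aux_choose2 (m : ℕ) : 2 * (m+1).choose 2 = m * (m+1) := by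
  induction m with
  | zero => rfl
  | succ n ih =>
    rw [show n+1+1 = (n+1)+1 from rfl, Nat.choose_succ_succ (n+1) 1,
      Nat.choose_one_right, Nat.mul_add, ih]; ring

lemma aux_choose3 (m : ℕ) : 6 * (m+2).choose 3 = m * (m+1) * (m+2) := by
  induction m with
  | zero => rfl
  | succ n ih =>
    rw [show n+1+2 = (n+2)+1 from rfl, Nat.choose_succ_succ (n+2) 2, Nat.mul_add, ih,
      show (6:ℕ) * (n+2).choose 2 = 3 * ((n+1)*(n+2)) from by rw [← aux_choose2 (n+1)]; ring]
    ring

/-- With `f 1 = 5`, `f k = C(f (k-1) + 1, 2)` for `k ≥ 2` counting the `k`-level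
obstruction branches, the set `O_Br(k)` of graphs obtained from unordered triples
(with repetition) of branches has `|O_Br(k)| = C(f k + 2, 3)` elements. Then
`|O_Br(k)| ≥ (4/3)·(5/2)^(3·2^(k-1))`, and `log log |O_Br(k)| = Θ(k)`. -/
theorem stmt18 (f : ℕ → ℕ) (h1 : f 1 = 5)
    (hrec : ∀ k, 2 ≤ k → f k = (f (k - 1) + 1).choose 2)
    (N : ℕ → ℕ) (hN : ∀ k, N k = (f k + 2).choose 3) :
    (∀ k, 1 ≤ k → 4 * 5 ^ (3 * 2 ^ (k - 1)) ≤ 3 * 2 ^ (3 * 2 ^ (k - 1)) * N k) ∧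
    ∃ a b : ℝ, 0 < a ∧ ∀ k : ℕ, 1 ≤ k →
      a * k ≤ Real.log (Real.log (N k)) ∧ Real.log (Real.log (N k)) ≤ b * k := by
  -- recurrence in product form
  have hstep : ∀ j : ℕ, 2 * f (j + 2) = f (j+1) * (f (j+1) + 1) := by
    intro j
    have := hrec (j+2) (by omega)
    simp only [show j+2-1 = j+1 from rfl] at this
    rw [this, aux_choose2]
  -- lower bound on f
  have P : ∀ j : ℕ, 2 * 5 ^ (2^j) ≤ 2 ^ (2^j) * f (j+1) := by
    intro j
    induction j with
    | zero => simp [h1]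
    | succ n ih =>
      have hst := hstep n
      have hsq : (2 * 5 ^ (2^n)) * (2 * 5 ^ (2^n)) ≤ (2 ^ (2^n) * f (n+1)) * (2 ^ (2^n) * f (n+1)) :=
        Nat.mul_le_mul ih ih
      have e5 : (5:ℕ) ^ (2^(n+1)) = 5 ^ (2^n) * 5 ^ (2^n) := by
        rw [← pow_add]; congr 1; ring
      have e2 : (2:ℕ) ^ (2^(n+1)) = 2 ^ (2^n) * 2 ^ (2^n) := by
        rw [← pow_add]; congr 1; ring
      rw [e5, e2]
      nlinarith [hsq, hst, Nat.zero_le (2 ^ (2^n) * 2 ^ (2^n))]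
  -- upper bound on f
  have Q : ∀ j : ℕ, f (j+1) ≤ 5 ^ (2^j) := by
    intro j
    induction j with
    | zero => simp [h1]
    | succ n ih =>
      have hst := hstep n
      have hf1 : 1 ≤ f (n+1) := by
        rcases Nat.eq_zero_or_pos (f (n+1)) with h0 | h
        · exfalso
          have hP := P n
          rw [h0, Nat.mul_zero] at hP
          have h5 : 0 < 5 ^ (2^n) := Nat.pow_pos (by norm_num)
          omega
        · exact h
      have e5 : (5:ℕ) ^ (2^(n+1)) = 5 ^ (2^n) * 5 ^ (2^n) := by
        rw [← pow_add]; congr 1; ring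
      rw [e5]
      nlinarith [Nat.mul_le_mul ih ih, hst, hf1]
  -- part 1
  have part1 : ∀ k, 1 ≤ k → 4 * 5 ^ (3 * 2 ^ (k - 1)) ≤ 3 * 2 ^ (3 * 2 ^ (k - 1)) * N k := by
    intro k hk
    obtain ⟨j, rfl⟩ : ∃ j, k = j + 1 := ⟨k - 1, by omega⟩
    simp only [Nat.add_sub_cancel]
    set F := f (j+1) with hF
    have h6 : 6 * N (j+1) = F * (F + 1) * (F + 2) := by rw [hN, aux_choose3]
    have hP := P j
    have hcube : (2 * 5 ^ (2^j))^3 ≤ (2 ^ (2^j) * F)^3 := Nat.pow_le_pow_left hP 3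
    have e5 : (5:ℕ) ^ (3 * 2^j) = (5 ^ (2^j))^3 := by rw [← pow_mul]; congr 1; ring
    have e2 : (2:ℕ) ^ (3 * 2^j) = (2 ^ (2^j))^3 := by rw [← pow_mul]; congr 1; ring
    rw [e5, e2]
    have hFcube : F^3 ≤ 6 * N (j+1) := by
      rw [h6]; nlinarith [Nat.zero_le F]
    have key : 6 * (4 * (5 ^ (2^j))^3) ≤ 6 * (3 * (2 ^ (2^j))^3 * N (j+1)) := by
      have h2 : (2 ^ (2^j))^3 * F^3 ≤ (2 ^ (2^j))^3 * (6 * N (j+1)) :=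
        Nat.mul_le_mul_left _ hFcube
      nlinarith [hcube, h2]
    exact Nat.le_of_mul_le_mul_left key (by norm_num)
  refine ⟨part1, Real.log 2, 5, Real.log_pos (by norm_num), ?_⟩
  intro k hk
  obtain ⟨j, rfl⟩ : ∃ j, k = j + 1 := ⟨k - 1, by omega⟩
  -- N lower bound: 2^(3·2^j) ≤ N (j+1)
  have hNlow : 2 ^ (3 * 2^j) ≤ N (j+1) := by
    have h1k := part1 (j+1) (by omega)
    simp only [Nat.add_sub_cancel] at h1k
    have h45 : 4 * (2 ^ (3 * 2^j) * 2 ^ (3 * 2^j)) ≤ 4 * 5 ^ (3 * 2^j) := by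
      have : (4:ℕ) ^ (3*2^j) ≤ 5 ^ (3*2^j) := Nat.pow_le_pow_left (by norm_num) _
      calc 4 * (2 ^ (3 * 2^j) * 2 ^ (3 * 2^j)) = 4 * 4 ^ (3*2^j) := by
            rw [← pow_add, show (4:ℕ) = 2^2 from rfl, ← pow_mul]; congr 1; ring
        _ ≤ 4 * 5 ^ (3*2^j) := Nat.mul_le_mul_left _ this
    have hcomb : 2 ^ (3*2^j) * (4 * 2 ^ (3*2^j)) ≤ 2 ^ (3*2^j) * (3 * N (j+1)) := by
      calc 2 ^ (3*2^j) * (4 * 2 ^ (3*2^j)) = 4 * (2 ^ (3 * 2^j) * 2 ^ (3 * 2^j)) := by ring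
        _ ≤ 4 * 5 ^ (3 * 2^j) := h45
        _ ≤ 3 * 2 ^ (3 * 2^j) * N (j+1) := h1k
        _ = 2 ^ (3*2^j) * (3 * N (j+1)) := by ring
    have := Nat.le_of_mul_le_mul_left hcomb (Nat.pow_pos (by norm_num))
    omega
  -- N upper bound: N (j+1) ≤ 2^(2^(j+5))
  have hNhigh : N (j+1) ≤ 2 ^ (2^(j+5)) := by
    set F := f (j+1) with hF
    have h6 : 6 * N (j+1) = F * (F + 1) * (F + 2) := by rw [hN, aux_choose3]
    have hQ := Q j
    have h5 : N (j+1) ≤ 5 ^ (3 * 2^j + 3) := by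
      have hF2 : F + 2 ≤ 5 * 5^(2^j) := by
        have : (1:ℕ) ≤ 5^(2^j) := Nat.one_le_pow _ _ (by norm_num)
        omega
      have : F * (F+1) * (F+2) ≤ (5 * 5^(2^j)) * (5 * 5^(2^j)) * (5 * 5^(2^j)) := by
        apply Nat.mul_le_mul (Nat.mul_le_mul (by omega) (by omega)) hF2
      have e : (5:ℕ) ^ (3 * 2^j + 3) = (5 * 5^(2^j)) * (5 * 5^(2^j)) * (5 * 5^(2^j)) := by
        rw [show (5 * 5^(2^j)) * (5 * 5^(2^j)) * (5 * 5^(2^j)) = 5^3 * (5^(2^j))^3 from by ring,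
          ← pow_mul, ← pow_add]
        congr 1; ring
      rw [e]
      omega
    calc N (j+1) ≤ 5 ^ (3 * 2^j + 3) := h5
      _ ≤ 8 ^ (3 * 2^j + 3) := Nat.pow_le_pow_left (by norm_num) _
      _ = 2 ^ (3 * (3 * 2^j + 3)) := by rw [show (8:ℕ) = 2^3 from rfl, ← pow_mul]
      _ ≤ 2 ^ (2^(j+5)) := by
        apply Nat.pow_le_pow_right (by norm_num)
        have : 1 ≤ 2^j := Nat.one_le_pow _ _ (by norm_num)
        have e : (2:ℕ)^(j+5) = 32 * 2^j := by rw [pow_add]; ring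
        omega
  -- to reals
  have hlog2lb : (2/3 : ℝ) < Real.log 2 := by
    have := Real.log_two_gt_d9; norm_num at this ⊢; linarith
  have hlog2ub : Real.log 2 ≤ 1 := by
    have := Real.log_two_lt_d9; norm_num at this ⊢; linarith
  have hNlowR : (2:ℝ) ^ (3 * 2^j) ≤ (N (j+1) : ℝ) := by exact_mod_cast hNlow
  have hNhighR : ((N (j+1) : ℝ)) ≤ 2 ^ (2^(j+5)) := by exact_mod_cast hNhigh
  have hNpos : (0:ℝ) < (N (j+1) : ℝ) := lt_of_lt_of_le (by positivity) hNlowR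
  have hlogNlb : (2:ℝ)^(j+1) ≤ Real.log (N (j+1)) := by
    have h := Real.log_le_log (by positivity : (0:ℝ) < 2 ^ (3 * 2^j)) hNlowR
    rw [Real.log_pow] at h
    have hcast : ((3 * 2^j : ℕ) : ℝ) = 3 * 2^j := by push_cast; ring
    rw [hcast] at h
    calc (2:ℝ)^(j+1) = 3 * (2:ℝ)^j * (2/3) := by ring
      _ ≤ 3 * (2:ℝ)^j * Real.log 2 := by
          apply mul_le_mul_of_nonneg_left (le_of_lt hlog2lb) (by positivity)
      _ ≤ Real.log (N (j+1)) := by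
          have : (3:ℝ) * 2^j * Real.log 2 = 3 * 2^j * Real.log 2 := rfl
          linarith [h]
  have hlogNub : Real.log (N (j+1)) ≤ (2:ℝ)^(j+5) := by
    have h := Real.log_le_log hNpos hNhighR
    rw [Real.log_pow] at h
    have hcast : ((2^(j+5) : ℕ) : ℝ) = 2^(j+5) := by push_cast; ring
    rw [hcast] at h
    calc Real.log (N (j+1)) ≤ (2:ℝ)^(j+5) * Real.log 2 := h
      _ ≤ (2:ℝ)^(j+5) * 1 := by
          apply mul_le_mul_of_nonneg_left hlog2ub (by positivity)
      _ = (2:ℝ)^(j+5) := by ring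
  have hlogNpos : (0:ℝ) < Real.log (N (j+1)) :=
    lt_of_lt_of_le (by positivity) hlogNlb
  constructor
  · -- lower: log 2 * (j+1) ≤ log log N
    have h := Real.log_le_log (by positivity : (0:ℝ) < 2^(j+1)) hlogNlb
    rw [Real.log_pow] at h
    calc Real.log 2 * ((j+1 : ℕ) : ℝ) = ((j+1 : ℕ) : ℝ) * Real.log 2 := by ring
      _ ≤ Real.log (Real.log (N (j+1))) := h
  · -- upper: log log N ≤ 5 * (j+1)
    have h := Real.log_le_log hlogNpos hlogNub
    rw [Real.log_pow] at h
    push_cast at h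
    have hle : ((j:ℝ) + 5) * Real.log 2 ≤ ((j:ℝ) + 5) * 1 :=
      mul_le_mul_of_nonneg_left hlog2ub (by positivity)
    push_cast
    have hj0 : (0:ℝ) ≤ (j:ℝ) := Nat.cast_nonneg j
    nlinarith [h, hle, hj0]
end
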